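/- arXiv:1906.09163 — 2 statements merged into one kernel-verified Lean document; each statement's English description precedes it below -/
import Mathlib

section
/- Let 𝔸 be an algebra, S a finite set, and R ≤ 𝔸^(2^S) an |S|-dimensional tolerance of 𝔸. For every Q ⊆ S and all f, g ∈ 2^Q, the projections satisfy cut_Q(R)_f = cut_Q(R)_g, and each such projection is an (|S∖Q|)-dimensional tolerance of 𝔸; moreover, if R is an |S|-dimensional congruence, then each cut_Q(R)_f is an (|S∖Q|)-dimensional congruence. -/
universe u v

structure Signature : Type 1 where
  ops : Type
  arity : ops → ℕ

class Alg (σ : Signature) (A : Type u) : Type u where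
  interp : ∀ o : σ.ops, (Fin (σ.arity o) → A) → A

/-- A labeled `S`-dimensional cube with vertices labeled by elements of `A`. -/
abbrev Cube (S : Type v) (A : Type u) : Type (max u v) := (S → Bool) → A

section Defs

variable {A : Type u} {B : Type u} {S : Type v}

def Quasireflexive (R : Set (B × B)) : Prop :=
  ∀ a b : B, (a, b) ∈ R → (a, a) ∈ R ∧ (b, b) ∈ R

def SymmRel (R : Set (B × B)) : Prop := ∀ a b : B, (a, b) ∈ R → (b, a) ∈ R

def TransRel (R : Set (B × B)) : Prop :=
  ∀ a b c : B, (a, b) ∈ R → (b, c) ∈ R → (a, c) ∈ R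

def face [DecidableEq S] (i : S) (b : Bool) (γ : Cube S A) : Cube {x : S // x ≠ i} A :=
  fun f => γ fun j => if h : j = i then b else f ⟨j, h⟩

def facesRel [DecidableEq S] (i : S) (R : Set (Cube S A)) :
    Set (Cube {x : S // x ≠ i} A × Cube {x : S // x ≠ i} A) :=
  {p | ∃ γ ∈ R, p = (face i false γ, face i true γ)}

def SRefl [DecidableEq S] (R : Set (Cube S A)) : Prop := ∀ i : S, Quasireflexive (facesRel i R)
def SSymm [DecidableEq S] (R : Set (Cube S A)) : Prop := ∀ i : S, SymmRel (facesRel i R)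
def STrans [DecidableEq S] (R : Set (Cube S A)) : Prop := ∀ i : S, TransRel (facesRel i R)

def glue (i : S) (a b : Cube {x : S // x ≠ i} A) : Cube S A :=
  fun f => if f i then b (fun j => f j.val) else a (fun j => f j.val)

def reflMap [DecidableEq S] (i : S) (b : Bool) (γ : Cube S A) : Cube S A :=
  glue i (face i b γ) (face i b γ)

def symMap [DecidableEq S] (i : S) (γ : Cube S A) : Cube S A :=
  glue i (face i true γ) (face i false γ)

def cut (Q : Set S) [DecidablePred (· ∈ Q)] (γ : Cube S A) :
    Cube {x : S // x ∈ Q} (Cube {x : S // x ∉ Q} A) :=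
  fun f g => γ fun j => if h : j ∈ Q then f ⟨j, h⟩ else g ⟨j, h⟩

def cutProj (Q : Set S) [DecidablePred (· ∈ Q)] (R : Set (Cube S A))
    (f : {x : S // x ∈ Q} → Bool) : Set (Cube {x : S // x ∉ Q} A) :=
  (fun γ => cut Q γ f) '' R

variable (σ : Signature)

def CompatCube [Alg σ A] (R : Set (Cube S A)) : Prop :=
  ∀ (o : σ.ops) (γ : Fin (σ.arity o) → Cube S A), (∀ k, γ k ∈ R) →
    (fun f => Alg.interp (A := A) o fun k => γ k f) ∈ R

def CompatRel [Alg σ A] (θ : Set (A × A)) : Prop :=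
  ∀ (o : σ.ops) (x y : Fin (σ.arity o) → A), (∀ k, (x k, y k) ∈ θ) →
    (Alg.interp (A := A) o x, Alg.interp (A := A) o y) ∈ θ

def IsCongruence [Alg σ A] (θ : Set (A × A)) : Prop :=
  (∀ a : A, (a, a) ∈ θ) ∧ SymmRel θ ∧ TransRel θ ∧ CompatRel σ θ

def IsTolerance [Alg σ A] [DecidableEq S] (R : Set (Cube S A)) : Prop :=
  CompatCube σ R ∧ SRefl R ∧ SSymm R

def IsHCongruence [Alg σ A] [DecidableEq S] (R : Set (Cube S A)) : Prop :=
  IsTolerance σ R ∧ STrans R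

def subalgGen [Alg σ A] (X : Set (Cube S A)) : Set (Cube S A) :=
  ⋂₀ {R : Set (Cube S A) | CompatCube σ R ∧ X ⊆ R}

def tolGen [Alg σ A] [DecidableEq S] (X : Set (Cube S A)) : Set (Cube S A) :=
  ⋂₀ {R : Set (Cube S A) | IsTolerance σ R ∧ X ⊆ R}

def congGen [Alg σ A] [DecidableEq S] (X : Set (Cube S A)) : Set (Cube S A) :=
  ⋂₀ {R : Set (Cube S A) | IsHCongruence σ R ∧ X ⊆ R}

def cubeAt (i : S) (p : A × A) : Cube S A := fun f => bif f i then p.2 else p.1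

def cubeSet (i : S) (θ : Set (A × A)) : Set (Cube S A) := cubeAt i '' θ

def MRel [Alg σ A] [DecidableEq S] (θ : S → Set (A × A)) : Set (Cube S A) :=
  tolGen σ (⋃ i : S, cubeSet i (θ i))

def DeltaRel [Alg σ A] [DecidableEq S] (θ : S → Set (A × A)) : Set (Cube S A) :=
  congGen σ (⋃ i : S, cubeSet i (θ i))

def rectRel [DecidableEq S] (θ : S → Set (A × A)) : Set (Cube S A) :=
  {γ | ∀ (i : S) (f : {x : S // x ≠ i} → Bool), (face i false γ f, face i true γ f) ∈ θ i}

def dirClosure [DecidableEq S] (i : S) (R : Set (Cube S A)) : Set (Cube S A) :=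
  {γ | Relation.TransGen (fun a b : Cube {x : S // x ≠ i} A => (a, b) ∈ facesRel i R)
      (face i false γ) (face i true γ)}

def Centrality [DecidableEq S] [Fintype S] (δ : Set (A × A)) (i : S)
    (R : Set (Cube S A)) : Prop :=
  ¬ ∃ γ ∈ R, Nat.card {f : {x : S // x ≠ i} → Bool //
      (face i false γ f, face i true γ f) ∈ δ} = 2 ^ (Fintype.card S - 1) - 1

end Defs

def finMod (n : ℕ) [NeZero n] (j : ℕ) : Fin n :=
  ⟨j % n, Nat.mod_lt _ (Nat.pos_of_ne_zero (NeZero.ne n))⟩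

def tcSeq {A : Type u} {n : ℕ} [NeZero n] (Y : Set (Cube (Fin n) A)) :
    ℕ → Set (Cube (Fin n) A)
  | 0 => dirClosure (finMod n 0) Y
  | j + 1 => dirClosure (finMod n (j + 1)) (tcSeq Y j)

def tcClosure {A : Type u} {n : ℕ} [NeZero n] (Y : Set (Cube (Fin n) A)) :
    Set (Cube (Fin n) A) := ⋃ j : ℕ, tcSeq Y j

def lastIdx (n : ℕ) [NeZero n] : Fin n :=
  ⟨n - 1, Nat.sub_lt (Nat.pos_of_ne_zero (NeZero.ne n)) Nat.one_pos⟩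

def tcComm (σ : Signature) {A : Type u} [Alg σ A] (n : ℕ) [NeZero n]
    (θ : Fin n → Set (A × A)) : Set (A × A) :=
  ⋂₀ {δ : Set (A × A) | IsCongruence σ δ ∧ Centrality δ (lastIdx n) (MRel σ θ)}

def hComm (σ : Signature) {A : Type u} [Alg σ A] (n : ℕ) [NeZero n]
    (θ : Fin n → Set (A × A)) : Set (A × A) :=
  ⋂₀ {δ : Set (A × A) | IsCongruence σ δ ∧ Centrality δ (lastIdx n) (DeltaRel σ θ)}

inductive Term (σ : Signature) (k : ℕ) : Type
  | var : Fin k → Term σ k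
  | app : (o : σ.ops) → (Fin (σ.arity o) → Term σ k) → Term σ k

def Term.eval {σ : Signature} {k : ℕ} {A : Type u} [Alg σ A] :
    Term σ k → (Fin k → A) → A
  | .var i, v => v i
  | .app o ts, v => Alg.interp (A := A) o fun j => (ts j).eval v

def IsTaylorAlg (σ : Signature) (A : Type u) [Alg σ A] : Prop :=
  ∃ (m : ℕ) (t : Term σ (m + 1)),
    (∀ a : A, t.eval (fun _ => a) = a) ∧
    ∀ e : Fin (m + 1), ∃ u v : Fin (m + 1) → Bool, u e = false ∧ v e = true ∧
      ∀ x y : A, t.eval (fun i => bif u i then y else x)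
               = t.eval (fun i => bif v i then y else x)

open Classical in
noncomputable def comCube {A : Type u} (n : ℕ) (x y : A) : Cube (Fin n) A :=
  fun f => if ∀ i, f i = true then y else x

def iSupported {A : Type u} {S : Type v} [DecidableEq S] (i : S) (γ : Cube S A)
    (x y : A) : Prop :=
  face i false γ (fun _ => true) = x ∧ face i true γ (fun _ => true) = y ∧
  ∀ f : {z : S // z ≠ i} → Bool, f ≠ (fun _ => true) →
    face i false γ f = face i true γ f

def sqCube {A : Type u} (a b c d : A) : Cube (Fin 2) A :=
  fun f => if f 0 then (if f 1 then d else c) else (if f 1 then b else a)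

def lcs (σ : Signature) {A : Type u} [Alg σ A] (θ : Set (A × A)) : ℕ → Set (A × A)
  | 0 => θ
  | n + 1 => tcComm σ 2 ![θ, lcs σ θ n]

def diagRel (A : Type u) : Set (A × A) := {p : A × A | p.1 = p.2}

/-!
Quasireflexivity of `R` in direction `i` turns a cube of `R` into the cube whose two `i`-faces
both equal one of its `i`-faces. Doing this for every direction in `Q` turns `γ ∈ R` into a cube
of `R` that is constant along `Q` and whose cut at every `g` is the cut of `γ` at `f`; hence all
cuts coincide. The `i`-faces of a cut are reindexed `i`-faces of the original cube, so
compatibility, quasireflexivity and symmetry pass to the cuts. Transitivity needs the collapsed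
cubes, whose faces are determined by the faces of their cuts.
-/

section CubeFaces

variable {A : Type u} {S : Type v} [DecidableEq S]

theorem face_apply_val (i : S) (b : Bool) (γ : Cube S A) (m : S → Bool) :
    face i b γ (fun x => m x) = γ (Function.update m i b) := by
  unfold face
  congr 1
  funext j
  by_cases h : j = i <;> simp [h]

theorem SRefl.comp_update_mem {R : Set (Cube S A)} (hR : SRefl R) {γ : Cube S A} (hγ : γ ∈ R)
    (i : S) (b : Bool) : (fun m => γ (Function.update m i b)) ∈ R := by
  obtain ⟨δ, hδ, hfaces⟩ : (face i b γ, face i b γ) ∈ facesRel i R := by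
    have := hR i _ _ ⟨γ, hγ, rfl⟩
    cases b
    exacts [this.1, this.2]
  rw [Prod.mk.injEq] at hfaces
  convert hδ using 1
  funext m
  calc γ (Function.update m i b) = face i b γ (fun x => m x) := (face_apply_val i b γ m).symm
    _ = face i (m i) δ (fun x => m x) := by
      cases m i
      exacts [congrFun hfaces.1 _, congrFun hfaces.2 _]
    _ = δ m := by rw [face_apply_val, Function.update_eq_self]

theorem SRefl.comp_piecewise_mem {R : Set (Cube S A)} (hR : SRefl R) (T : Finset S)
    (e : S → Bool) {γ : Cube S A} (hγ : γ ∈ R) : (fun m => γ (T.piecewise e m)) ∈ R := by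
  induction T using Finset.induction_on generalizing γ with
  | empty => simpa using hγ
  | insert i T _ ih =>
    simpa only [Finset.piecewise_insert] using ih (hR.comp_update_mem hγ i (e i))

end CubeFaces

theorem Quasireflexive.image {B C : Type*} {T : Set (B × B)} (hT : Quasireflexive T)
    (φ : B → C) : Quasireflexive (Prod.map φ φ '' T) := by
  rintro _ _ ⟨⟨a, b⟩, hab, h⟩
  obtain ⟨rfl, rfl⟩ := Prod.mk.inj h
  exact ⟨⟨(a, a), (hT a b hab).1, rfl⟩, ⟨(b, b), (hT a b hab).2, rfl⟩⟩

theorem SymmRel.image {B C : Type*} {T : Set (B × B)} (hT : SymmRel T) (φ : B → C) :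
    SymmRel (Prod.map φ φ '' T) := by
  rintro _ _ ⟨⟨a, b⟩, hab, h⟩
  obtain ⟨rfl, rfl⟩ := Prod.mk.inj h
  exact ⟨(b, a), hT a b hab, rfl⟩

theorem CompatCube.image_comp {σ : Signature} {A : Type u} {S T : Type*} [Alg σ A]
    {R : Set (Cube S A)} (hR : CompatCube σ R) (φ : (T → Bool) → (S → Bool)) :
    CompatCube σ ((· ∘ φ) '' R) := by
  intro o γ hγ
  choose δ hδR hδ using hγ
  exact ⟨_, hR o δ hδR, by funext m; simp [← hδ]⟩

section Cut

variable {A : Type u} {S : Type v} (Q : Set S) [DecidablePred (· ∈ Q)]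

def collapse (f : {x : S // x ∈ Q} → Bool) (γ : Cube S A) : Cube S A :=
  fun m => cut Q γ f (fun j => m j)

theorem cut_collapse (f g : {x : S // x ∈ Q} → Bool) (γ : Cube S A) :
    cut Q (collapse Q f γ) g = cut Q γ f := by
  funext h
  simp only [collapse, cut]
  congr 1
  funext j
  split_ifs <;> rfl

variable [DecidableEq S] {Q}

theorem SRefl.collapse_mem (hQ : Q.Finite)
    {R : Set (Cube S A)} (hR : SRefl R) (f : {x : S // x ∈ Q} → Bool) {γ : Cube S A}
    (hγ : γ ∈ R) : collapse Q f γ ∈ R := by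
  convert hR.comp_piecewise_mem hQ.toFinset (fun j => if h : j ∈ Q then f ⟨j, h⟩ else false) hγ
    using 1
  funext m
  unfold collapse cut
  congr 1
  funext j
  by_cases h : j ∈ Q <;> simp [Finset.piecewise, h]

theorem cutProj_eq_of_SRefl (hQ : Q.Finite) {R : Set (Cube S A)} (hR : SRefl R)
    (f g : {x : S // x ∈ Q} → Bool) : cutProj Q R f = cutProj Q R g := by
  suffices ∀ f g, cutProj Q R f ⊆ cutProj Q R g from (this f g).antisymm (this g f)
  rintro f g _ ⟨γ, hγ, rfl⟩
  exact ⟨collapse Q f γ, hR.collapse_mem hQ f hγ, cut_collapse Q f g γ⟩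

variable (Q)

def cutFaceArg (f : {x : S // x ∈ Q} → Bool) (i : {x : S // x ∉ Q})
    (h : {y : {x : S // x ∉ Q} // y ≠ i} → Bool) : {x : S // x ≠ i.val} → Bool :=
  fun x => if hQ : x.val ∈ Q then f ⟨x.val, hQ⟩
    else h ⟨⟨x.val, hQ⟩, fun e => x.prop (congrArg Subtype.val e)⟩

theorem face_cut (f : {x : S // x ∈ Q} → Bool) (i : {x : S // x ∉ Q}) (b : Bool)
    (γ : Cube S A) : face i b (cut Q γ f) = face i.val b γ ∘ cutFaceArg Q f i := by
  funext h
  simp only [face, cut, cutFaceArg, Function.comp]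
  congr 1
  funext j
  by_cases hQ : j ∈ Q
  · have hj : j ≠ i.val := fun e => i.prop (e ▸ hQ)
    simp [hQ, hj]
  · by_cases hj : j = i.val
    · subst hj
      simp [hQ]
    · simp [hQ, hj, Subtype.ext_iff]

theorem face_collapse (f : {x : S // x ∈ Q} → Bool) (i : {x : S // x ∉ Q}) (b : Bool)
    (γ : Cube S A) : face i.val b (collapse Q f γ)
      = face i b (cut Q γ f) ∘ fun k y => k ⟨y.val.val, fun e => y.prop (Subtype.ext e)⟩ := by
  funext k
  simp only [face, collapse, cut, Function.comp]
  congr 1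
  funext j
  by_cases hQ : j ∈ Q
  · simp [hQ]
  · by_cases hj : j = i.val
    · subst hj
      simp [hQ]
    · simp [hQ, hj, Subtype.ext_iff]

theorem facesRel_cutProj (R : Set (Cube S A)) (f : {x : S // x ∈ Q} → Bool)
    (i : {x : S // x ∉ Q}) : facesRel i (cutProj Q R f)
      = Prod.map (· ∘ cutFaceArg Q f i) (· ∘ cutFaceArg Q f i) '' facesRel i.val R := by
  ext p
  simp only [facesRel, cutProj, Set.mem_image]
  constructor
  · rintro ⟨_, ⟨γ, hγ, rfl⟩, rfl⟩
    exact ⟨_, ⟨γ, hγ, rfl⟩, by rw [face_cut, face_cut]; rfl⟩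
  · rintro ⟨_, ⟨γ, hγ, rfl⟩, rfl⟩
    exact ⟨_, ⟨γ, hγ, rfl⟩, by rw [face_cut, face_cut]; rfl⟩

variable {Q}

theorem sTrans_cutProj (hQ : Q.Finite) {R : Set (Cube S A)} (hR : SRefl R) (hT : STrans R)
    (f : {x : S // x ∈ Q} → Bool) : STrans (cutProj Q R f) := by
  intro i a b c hab hbc
  obtain ⟨_, ⟨γ, hγ, rfl⟩, hab⟩ := hab
  obtain ⟨_, ⟨γ', hγ', rfl⟩, hbc⟩ := hbc
  rw [Prod.mk.injEq] at hab hbc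
  have hmid : face i.val true (collapse Q f γ) = face i.val false (collapse Q f γ') := by
    rw [face_collapse, face_collapse, ← hab.2, ← hbc.1]
  have hac := hT i.val _ _ _ ⟨_, hR.collapse_mem hQ f hγ, rfl⟩
    (by rw [hmid]; exact ⟨_, hR.collapse_mem hQ f hγ', rfl⟩)
  rw [facesRel_cutProj]
  refine ⟨_, hac, ?_⟩
  simp only [Prod.map, ← face_cut, cut_collapse, hab.1, hbc.2]

variable {σ : Signature} [Alg σ A]

theorem isTolerance_cutProj {R : Set (Cube S A)} (hR : IsTolerance σ R)
    (f : {x : S // x ∈ Q} → Bool) : IsTolerance σ (cutProj Q R f) := by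
  obtain ⟨hcompat, hrefl, hsymm⟩ := hR
  refine ⟨hcompat.image_comp fun (g : {x : S // x ∉ Q} → Bool) j =>
    if h : j ∈ Q then f ⟨j, h⟩ else g ⟨j, h⟩, ?_, ?_⟩
  · intro i
    rw [facesRel_cutProj]
    exact (hrefl i.val).image _
  · intro i
    rw [facesRel_cutProj]
    exact (hsymm i.val).image _

theorem isHCongruence_cutProj (hQ : Q.Finite) {R : Set (Cube S A)} (hR : IsHCongruence σ R)
    (f : {x : S // x ∈ Q} → Bool) : IsHCongruence σ (cutProj Q R f) :=
  ⟨isTolerance_cutProj hR.1 f, sTrans_cutProj hQ hR.1.2.1 hR.2 f⟩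

end Cut

/-- projections of a higher-dimensional tolerance are tolerances, all
projections at different `f, g ∈ 2^Q` coincide, and the same holds with `tolerance`
replaced by `congruence`. -/
theorem stmt5 {A : Type u} {S : Type v} (σ : Signature) [Alg σ A]
    [Fintype S] [DecidableEq S] (R : Set (Cube S A))
    (Q : Set S) [DecidablePred (· ∈ Q)] :
    (IsTolerance σ R →
      (∀ f g : {x : S // x ∈ Q} → Bool, cutProj Q R f = cutProj Q R g) ∧
      (∀ f : {x : S // x ∈ Q} → Bool, IsTolerance σ (cutProj Q R f))) ∧
    (IsHCongruence σ R →
      (∀ f g : {x : S // x ∈ Q} → Bool, cutProj Q R f = cutProj Q R g) ∧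
      (∀ f : {x : S // x ∈ Q} → Bool, IsHCongruence σ (cutProj Q R f))) :=
  ⟨fun hR => ⟨cutProj_eq_of_SRefl Q.toFinite hR.2.1, isTolerance_cutProj hR⟩,
    fun hR => ⟨cutProj_eq_of_SRefl Q.toFinite hR.1.2.1, isHCongruence_cutProj Q.toFinite hR⟩⟩
end

section
/- If R is an |S|-dimensional tolerance of an algebra 𝔸 and i ∈ S, then R^(∘_i), the i-directional transitive closure of R, is also an |S|-dimensional tolerance of 𝔸 containing R. -/
universe u v

/-! A face pair of `R^(∘_i)` in direction `i` is a chain of face pairs of `R`, so it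
inherits quasireflexivity and symmetry from `R`, and compatibility because quasireflexivity lets
chains be advanced one argument at a time. In a direction `j ≠ i`, the operations
`γ ↦ glue j (face j u γ) (face j v γ)` that witness quasireflexivity and symmetry of `R` act on
`i`-faces as the same operations one dimension lower, so they carry every chain of `i`-face pairs
of `R` to another such chain. -/

open Relation

theorem Relation.TransGen.pi_of_quasireflexive {α : Type*} {r : α → α → Prop} {ι : Type*}
    [Fintype ι] [DecidableEq ι] (hr : ∀ a b, r a b → r a a ∧ r b b) {x y : ι → α}
    (h : ∀ k, TransGen r (x k) (y k)) :
    TransGen (fun x y : ι → α => ∀ k, r (x k) (y k)) x y := by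
  have refl_left : ∀ k, r (x k) (x k) := fun k => by
    obtain ⟨c, hc, -⟩ := TransGen.head'_iff.1 (h k)
    exact (hr _ _ hc).1
  have refl_right : ∀ k, r (y k) (y k) := fun k => by
    obtain ⟨c, -, hc⟩ := TransGen.tail'_iff.1 (h k)
    exact (hr _ _ hc).2
  -- Move the coordinates from `x` to `y` one at a time, keeping the others fixed.
  suffices ∀ s : Finset ι, TransGen _ x (s.piecewise y x) by
    simpa using this Finset.univ
  intro s
  induction s using Finset.induction_on with
  | empty => simpa using TransGen.single refl_left
  | insert a s ha ih =>
    set z := s.piecewise y x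
    have hz : ∀ k, r (z k) (z k) := fun k => by
      by_cases hk : k ∈ s <;> simp [z, hk, refl_left, refl_right]
    have hstep : TransGen (fun x y : ι → α => ∀ k, r (x k) (y k))
        (Function.update z a (x a)) (Function.update z a (y a)) := by
      refine TransGen.lift (Function.update z a) (fun b c hbc k => ?_) _ _ (h a)
      rcases eq_or_ne k a with rfl | hk
      · simpa using hbc
      · simpa [hk] using hz k
    have hza : Function.update z a (x a) = z :=
      Function.update_eq_self_iff.2 (Finset.piecewise_eq_of_notMem _ _ _ ha).symm
    rw [hza] at hstep
    rw [Finset.piecewise_insert]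
    exact ih.trans hstep

section Closure

variable {B : Type*}

theorem Quasireflexive.transGen {r : Set (B × B)} (hr : Quasireflexive r) :
    Quasireflexive {p : B × B | TransGen (fun a b => (a, b) ∈ r) p.1 p.2} := by
  intro a b hab
  obtain ⟨c, hac, -⟩ := TransGen.head'_iff.1 hab
  obtain ⟨d, -, hdb⟩ := TransGen.tail'_iff.1 hab
  exact ⟨.single (hr _ _ hac).1, .single (hr _ _ hdb).2⟩

theorem SymmRel.transGen {r : Set (B × B)} (hr : SymmRel r) :
    SymmRel {p : B × B | TransGen (fun a b => (a, b) ∈ r) p.1 p.2} := by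
  have : Std.Symm fun a b => (a, b) ∈ r := ⟨hr⟩
  exact fun a b hab => Std.Symm.symm _ _ hab

end Closure

section Cubes

variable {A : Type u} {S : Type v} [DecidableEq S]

@[simp]
theorem face_false_glue (i : S) (a b : Cube {x : S // x ≠ i} A) :
    face i false (glue i a b) = a := by
  funext f
  simp only [face, glue, dite_true, Bool.false_eq_true, if_false]
  congr 1
  funext k
  rw [dif_neg k.2]

@[simp]
theorem face_true_glue (i : S) (a b : Cube {x : S // x ≠ i} A) :
    face i true (glue i a b) = b := by
  funext f
  simp only [face, glue, dite_true, if_true]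
  congr 1
  funext k
  rw [dif_neg k.2]

@[simp]
theorem glue_face (i : S) (γ : Cube S A) :
    glue i (face i false γ) (face i true γ) = γ := by
  funext f
  simp only [glue, face]
  cases h : f i <;>
  · simp only [Bool.false_eq_true, if_false, if_true]
    congr 1
    funext k
    by_cases hk : k = i <;> simp [hk, h]

theorem mem_facesRel_iff_glue_mem {i : S} {R : Set (Cube S A)} {a b : Cube {x : S // x ≠ i} A} :
    (a, b) ∈ facesRel i R ↔ glue i a b ∈ R := by
  constructor
  · rintro ⟨γ, hγ, ⟨⟩⟩
    simpa using hγ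
  · exact fun h => ⟨glue i a b, h, by simp⟩

theorem quasireflexive_facesRel_iff {i : S} {R : Set (Cube S A)} :
    Quasireflexive (facesRel i R) ↔
      ∀ γ ∈ R, ∀ b, (face i b γ, face i b γ) ∈ facesRel i R := by
  constructor
  · rintro h γ hγ (_ | _)
    exacts [(h _ _ ⟨γ, hγ, rfl⟩).1, (h _ _ ⟨γ, hγ, rfl⟩).2]
  · rintro h _ _ ⟨γ, hγ, ⟨⟩⟩
    exact ⟨h γ hγ false, h γ hγ true⟩

theorem symmRel_facesRel_iff {i : S} {R : Set (Cube S A)} :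
    SymmRel (facesRel i R) ↔ ∀ γ ∈ R, (face i true γ, face i false γ) ∈ facesRel i R := by
  constructor
  · exact fun h γ hγ => h _ _ ⟨γ, hγ, rfl⟩
  · rintro h _ _ ⟨γ, hγ, ⟨⟩⟩
    exact h γ hγ

theorem facesRel_compat (σ : Signature) [Alg σ A] {R : Set (Cube S A)} (hR : CompatCube σ R)
    {i : S} (o : σ.ops) {x y : Fin (σ.arity o) → Cube {s : S // s ≠ i} A}
    (h : ∀ k, (x k, y k) ∈ facesRel i R) :
    ((fun f => Alg.interp o fun k => x k f), (fun f => Alg.interp o fun k => y k f)) ∈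
      facesRel i R := by
  rw [mem_facesRel_iff_glue_mem]
  convert hR o (fun k => glue i (x k) (y k)) (fun k => mem_facesRel_iff_glue_mem.1 (h k)) using 1
  funext f
  simp only [glue]
  split <;> rfl

def twist (j : S) (u v : Bool) (γ : Cube S A) : Cube S A :=
  glue j (face j u γ) (face j v γ)

theorem face_twist_of_ne {i j : S} (hji : j ≠ i) (u v c : Bool) (γ : Cube S A) :
    face i c (twist j u v γ) = twist (⟨j, hji⟩ : {x : S // x ≠ i}) u v (face i c γ) := by
  funext g
  have hgj : (if h : j = i then c else g ⟨j, h⟩) = g ⟨j, hji⟩ := dif_neg hji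
  simp only [twist, glue, face, hgj]
  split <;>
  · congr 1
    funext k
    by_cases hki : k = i
    · subst hki
      rw [dif_pos rfl, dif_neg (Ne.symm hji), dif_pos rfl]
    · rw [dif_neg hki]
      by_cases hkj : k = j
      · subst hkj
        rw [dif_pos rfl, dif_pos rfl]
      · rw [dif_neg hkj, dif_neg (fun h => hkj (congrArg Subtype.val h)), dif_neg hki]

theorem facesRel_dirClosure (i : S) (R : Set (Cube S A)) :
    facesRel i (dirClosure i R) =
      {p | TransGen (fun a b => (a, b) ∈ facesRel i R) p.1 p.2} := by
  ext ⟨a, b⟩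
  rw [mem_facesRel_iff_glue_mem]
  simp [dirClosure]

theorem subset_dirClosure (i : S) (R : Set (Cube S A)) : R ⊆ dirClosure i R :=
  fun γ hγ => .single ⟨γ, hγ, rfl⟩

theorem compatCube_dirClosure (σ : Signature) [Alg σ A] {R : Set (Cube S A)}
    (hR : CompatCube σ R) (hRefl : SRefl R) (i : S) : CompatCube σ (dirClosure i R) := by
  intro o γ hγ
  have hchain := TransGen.pi_of_quasireflexive (hRefl i) hγ
  exact TransGen.lift (p := fun a b => (a, b) ∈ facesRel i R)
    (fun (x : Fin (σ.arity o) → Cube {s : S // s ≠ i} A) f => Alg.interp o fun k => x k f)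
    (fun x y h => facesRel_compat σ hR o h) _ _ hchain

theorem face_mem_facesRel_dirClosure_of_ne {R : Set (Cube S A)} {i j : S} (hji : j ≠ i) {u v : Bool}
    (hR : ∀ γ ∈ R, (face j u γ, face j v γ) ∈ facesRel j R) {γ : Cube S A}
    (hγ : γ ∈ dirClosure i R) : (face j u γ, face j v γ) ∈ facesRel j (dirClosure i R) := by
  rw [mem_facesRel_iff_glue_mem]
  change TransGen _ (face i false (twist j u v γ)) (face i true (twist j u v γ))
  rw [face_twist_of_ne hji, face_twist_of_ne hji]
  refine TransGen.lift (p := fun a b => (a, b) ∈ facesRel i R)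
    (twist ⟨j, hji⟩ u v) ?_ _ _ hγ
  rintro _ _ ⟨ρ, hρ, ⟨⟩⟩
  exact ⟨twist j u v ρ, mem_facesRel_iff_glue_mem.1 (hR ρ hρ),
    by rw [face_twist_of_ne hji, face_twist_of_ne hji]⟩

theorem sRefl_dirClosure {R : Set (Cube S A)} (hRefl : SRefl R) (i : S) :
    SRefl (dirClosure i R) := by
  intro j
  by_cases hji : j = i
  · subst hji
    rw [facesRel_dirClosure]
    exact (hRefl j).transGen
  · exact quasireflexive_facesRel_iff.2 fun γ hγ b =>
      face_mem_facesRel_dirClosure_of_ne hji (quasireflexive_facesRel_iff.1 (hRefl j) · · b) hγ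

theorem sSymm_dirClosure {R : Set (Cube S A)} (hSymm : SSymm R) (i : S) :
    SSymm (dirClosure i R) := by
  intro j
  by_cases hji : j = i
  · subst hji
    rw [facesRel_dirClosure]
    exact (hSymm j).transGen
  · exact symmRel_facesRel_iff.2 fun γ hγ =>
      face_mem_facesRel_dirClosure_of_ne hji (symmRel_facesRel_iff.1 (hSymm j)) hγ

end Cubes

theorem stmt6_general {A : Type u} {S : Type v} (σ : Signature) [Alg σ A]
    [DecidableEq S] (R : Set (Cube S A)) (hR : IsTolerance σ R) (i : S) :
    IsTolerance σ (dirClosure i R) ∧ R ⊆ dirClosure i R := by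
  obtain ⟨hCompat, hRefl, hSymm⟩ := hR
  exact ⟨⟨compatCube_dirClosure σ hCompat hRefl i, sRefl_dirClosure hRefl i,
    sSymm_dirClosure hSymm i⟩, subset_dirClosure i R⟩

/-- the `i`-directional transitive closure of an |S|-dimensional tolerance
is again an |S|-dimensional tolerance containing it. -/
theorem stmt6 {A : Type u} {S : Type v} (σ : Signature) [Alg σ A]
    [Fintype S] [DecidableEq S] (R : Set (Cube S A)) (hR : IsTolerance σ R) (i : S) :
    IsTolerance σ (dirClosure i R) ∧ R ⊆ dirClosure i R :=
  stmt6_general σ R hR i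
end
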